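/- arXiv:1005.4317 — 2 statements merged into one kernel-verified Lean document; each statement's English description precedes it below -/
import Mathlib

section
/- Let 0 < μ ≤ 1. Suppose f ∈ 𝒮 has the representation (z/f(z))^μ = 1 + Σ_{n=1}^∞ b_n z^n with b_n ≥ 0 for all n, and satisfies Re( f'(z) (f(z)/z)^{μ−1} ) > 0 for all z ∈ 𝔻, where (f(z)/z)^{μ−1} is the principal power taken equal to 1 at z = 0. Then f ∈ 𝒰(1, μ). -/
/-!
Write `q = z / f` and `P = q ^ μ = 1 + ∑ bₙ zⁿ`. Differentiating `q f = z` gives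
`μ f' q P = μ P - z P'` near `0`, where `q` stays in the slit plane, hence on the whole disk by
the identity theorem; so `1 - f' (z/f)^(μ+1) = ∑ (n/μ - 1) bₙ zⁿ`, a series with nonnegative
coefficients since `μ ≤ 1`. On `(0, 1)` the positivity of `q ^ μ = P` forces `q > 0` (again as
`μ ≤ 1`), so there `f' (z/f)^(μ+1) = f' (f/z)^(μ-1) P²` has positive real part. Hence the
nonnegative series is `< 1` on `(0, 1)`, its coefficients sum to at most `1`, and it is bounded
by `1` on the whole disk.
-/

open Complex Metric Set

noncomputable section

/-- The open unit disk in ℂ. -/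
def unitDisk : Set ℂ := Metric.ball 0 1

/-- `f ∈ 𝒜`: analytic on the unit disk, `f 0 = 0`, `f' 0 = 1`. -/
def InA (f : ℂ → ℂ) : Prop :=
  AnalyticOnNhd ℂ f unitDisk ∧ f 0 = 0 ∧ deriv f 0 = 1

/-- `f ∈ 𝒮`: normalized analytic and univalent on the unit disk. -/
def InS (f : ℂ → ℂ) : Prop := InA f ∧ Set.InjOn f unitDisk

/-- `z f'(z)/f(z)`, understood as `1` at `z = 0`. -/
def zRatio (f : ℂ → ℂ) (z : ℂ) : ℂ := if z = 0 then 1 else z * deriv f z / f z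

/-- `f ∈ 𝒮_p(α)`. -/
def InSp (f : ℂ → ℂ) (α : ℝ) : Prop :=
  InS f ∧ ∀ z ∈ unitDisk, ‖zRatio f z - 1‖ ≤ (zRatio f z).re - α

/-- The principal power `(z/f(z))^μ`, taken equal to `1` at `z = 0`. -/
def pw (f : ℂ → ℂ) (μ : ℝ) (z : ℂ) : ℂ :=
  if z = 0 then 1 else (z / f z) ^ (μ : ℂ)

/-- `f ∈ 𝒰(λ, μ)`. -/
def InU (f : ℂ → ℂ) (lam μ : ℝ) : Prop :=
  InA f ∧ (∀ z ∈ unitDisk, z ≠ 0 → f z ≠ 0) ∧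
  ∀ z ∈ unitDisk,
    ‖deriv f z * (if z = 0 then 1 else (z / f z) ^ ((μ : ℂ) + 1)) - 1‖ ≤ lam

/-- `f ∈ 𝒮*(α)`: starlike of order `α`. -/
def InSstar (f : ℂ → ℂ) (α : ℝ) : Prop :=
  InS f ∧ ∀ z ∈ unitDisk, α < (zRatio f z).re

open Filter Topology
open scoped ComplexOrder

lemma summable_norm_mul_pow_of_summable {c : ℕ → ℂ}
    (hc : ∀ z ∈ ball (0 : ℂ) 1, Summable fun n => c n * z ^ n) {r : ℝ} (hr0 : 0 ≤ r)
    (hr1 : r < 1) : Summable fun n => ‖c n‖ * r ^ n := by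
  obtain ⟨t, hrt, ht1⟩ := exists_between hr1
  lift t to NNReal using hr0.trans hrt.le
  lift r to NNReal using hr0
  set p := FormalMultilinearSeries.ofScalars ℂ c
  have hnorm (s : NNReal) (n : ℕ) : ‖p n‖ * (s : ℝ) ^ n = ‖c n‖ * (s : ℝ) ^ n := by
    rw [FormalMultilinearSeries.ofScalars_norm]
  -- the terms at `t` tend to `0`, so the radius of convergence is at least `t > r`
  have hpt : (t : ENNReal) ≤ p.radius := by
    refine p.le_radius_of_tendsto (l := 0) ?_
    simp only [hnorm]
    simpa using (hc t (by simpa using ht1)).tendsto_atTop_zero.norm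
  have hpr : (r : ENNReal) < p.radius := lt_of_lt_of_le (by exact_mod_cast hrt) hpt
  simpa only [hnorm] using p.summable_norm_mul_pow hpr

lemma exists_mem_ball_summable_norm_mul_pow {c : ℕ → ℂ}
    (hc : ∀ z ∈ ball (0 : ℂ) 1, Summable fun n => c n * z ^ n) {z : ℂ} (hz : z ∈ ball (0 : ℂ) 1) :
    ∃ t, z ∈ ball (0 : ℂ) t ∧ Summable fun n => ‖c n‖ * t ^ n := by
  rw [mem_ball_zero_iff] at hz
  obtain ⟨t, hzt, ht1⟩ := exists_between hz
  exact ⟨t, mem_ball_zero_iff.2 hzt,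
    summable_norm_mul_pow_of_summable hc ((norm_nonneg z).trans hzt.le) ht1⟩

lemma norm_mul_pow_le_of_mem_ball {c w : ℂ} {t : ℝ} (hw : w ∈ ball (0 : ℂ) t) (n : ℕ) :
    ‖c * w ^ n‖ ≤ ‖c‖ * t ^ n := by
  rw [norm_mul, norm_pow]
  gcongr
  exact (mem_ball_zero_iff.1 hw).le

lemma differentiableOn_tsum_mul_pow {c : ℕ → ℂ}
    (hc : ∀ z ∈ ball (0 : ℂ) 1, Summable fun n => c n * z ^ n) :
    DifferentiableOn ℂ (fun w => ∑' n, c n * w ^ n) (ball 0 1) := by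
  intro z hz
  obtain ⟨t, hzt, ht⟩ := exists_mem_ball_summable_norm_mul_pow hc hz
  have hd := differentiableOn_tsum_of_summable_norm ht
    (fun n => (by fun_prop : Differentiable ℂ fun w => c n * w ^ n).differentiableOn) isOpen_ball
    (fun n w hw => norm_mul_pow_le_of_mem_ball hw n)
  exact (hd.differentiableAt (isOpen_ball.mem_nhds hzt)).differentiableWithinAt

lemma hasSum_nat_mul_mul_pow {c : ℕ → ℂ}
    (hc : ∀ z ∈ ball (0 : ℂ) 1, Summable fun n => c n * z ^ n) {z : ℂ} (hz : z ∈ ball (0 : ℂ) 1) :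
    HasSum (fun n => n * c n * z ^ n) (z * deriv (fun w => ∑' n, c n * w ^ n) z) := by
  obtain ⟨t, hzt, ht⟩ := exists_mem_ball_summable_norm_mul_pow hc hz
  have hd := hasSum_deriv_of_summable_norm ht
    (fun n => (by fun_prop : Differentiable ℂ fun w => c n * w ^ n).differentiableOn) isOpen_ball
    (fun n w hw => norm_mul_pow_le_of_mem_ball hw n) hzt
  have hterm (n : ℕ) : z * deriv (fun w => c n * w ^ n) z = n * c n * z ^ n := by
    rw [deriv_const_mul_field, deriv_pow_field]
    rcases n with _ | n
    · simp
    · rw [pow_succ, Nat.add_sub_cancel]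
      ring
  simpa only [hterm] using hd.mul_left z

lemma mul_deriv_mul_mul_eq_of_eventuallyEq_cpow {f q P : ℂ → ℂ} {μ z : ℂ}
    (hf : DifferentiableAt ℂ f z) (hq : DifferentiableAt ℂ q z)
    (hqf : (fun w => q w * f w) =ᶠ[𝓝 z] id) (hqz : q z ∈ slitPlane)
    (hP : P =ᶠ[𝓝 z] fun w => q w ^ μ) :
    μ * (deriv f z * q z * P z) = μ * P z - z * deriv P z := by
  have hq0 : q z ≠ 0 := slitPlane_ne_zero hqz
  have hdP : deriv P z = μ * q z ^ (μ - 1) * deriv q z := by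
    rw [hP.deriv_eq]
    exact (hq.hasDerivAt.cpow_const hqz).deriv
  have hdqf : deriv q z * f z + q z * deriv f z = 1 := by
    rw [← (hq.hasDerivAt.fun_mul hf.hasDerivAt).deriv, hqf.deriv_eq, deriv_id]
  have hqfz : q z * f z = z := hqf.eq_of_nhds
  have hpow : q z ^ (μ - 1) * q z = q z ^ μ := by
    rw [cpow_sub _ _ hq0, cpow_one, div_mul_cancel₀ _ hq0]
  -- multiplying `hdqf` by `q` and using `hqfz` gives `z q' = q - q² f'`
  rw [hdP, hP.eq_of_nhds, ← hpow]
  linear_combination (μ * q z ^ (μ - 1) * q z) * hdqf - (μ * q z ^ (μ - 1) * deriv q z) * hqfz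

lemma eqOn_mul_deriv_mul_mul_of_eqOn_cpow {f q P : ℂ → ℂ} {μ : ℂ} {U : Set ℂ} (hU : IsOpen U)
    (hUc : IsPreconnected U) (h0 : 0 ∈ U) (hf : AnalyticOnNhd ℂ f U)
    (hq : AnalyticOnNhd ℂ q U) (hP : AnalyticOnNhd ℂ P U) (hqf : ∀ z ∈ U, q z * f z = z)
    (hq0 : q 0 = 1) (hPq : ∀ z ∈ U, P z = q z ^ μ) :
    EqOn (fun z => μ * (deriv f z * q z * P z)) (fun z => μ * P z - z * deriv P z) U := by
  refine AnalyticOnNhd.eqOn_of_preconnected_of_eventuallyEq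
    (fun z hz => analyticAt_const.mul (((hf.deriv z hz).mul (hq z hz)).mul (hP z hz)))
    (fun z hz => (analyticAt_const.mul (hP z hz)).sub (analyticAt_id.mul (hP.deriv z hz)))
    hUc h0 ?_
  have hslit : ∀ᶠ z in 𝓝 0, q z ∈ slitPlane :=
    (hq 0 h0).continuousAt.eventually_mem (isOpen_slitPlane.mem_nhds (by simp [hq0]))
  filter_upwards [hU.mem_nhds h0, hslit] with z hz hqz
  exact mul_deriv_mul_mul_eq_of_eventuallyEq_cpow (hf z hz).differentiableAt
    (hq z hz).differentiableAt (eventually_of_mem (hU.mem_nhds hz) hqf) hqz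
    (eventually_of_mem (hU.mem_nhds hz) hPq)

lemma InS.ne_zero {f : ℂ → ℂ} (hf : InS f) {z : ℂ} (hz : z ∈ unitDisk) (hz0 : z ≠ 0) :
    f z ≠ 0 := fun hfz =>
  hz0 (hf.2 hz (mem_ball_self one_pos) (by rw [hfz, hf.1.2.1]))

lemma dslope_zero_eq_div {f : ℂ → ℂ} (hf0 : f 0 = 0) {z : ℂ} (hz : z ≠ 0) :
    dslope f 0 z = f z / z := by
  rw [dslope_of_ne _ hz, slope_def_field, hf0, sub_zero, sub_zero]

lemma InA.analyticOnNhd_inv_dslope {f : ℂ → ℂ} (hf : InA f)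
    (hne : ∀ z ∈ unitDisk, z ≠ 0 → f z ≠ 0) :
    AnalyticOnNhd ℂ (fun z => (dslope f 0 z)⁻¹) unitDisk := by
  have hd : AnalyticOnNhd ℂ (dslope f 0) unitDisk :=
    ((differentiableOn_dslope (isOpen_ball.mem_nhds (mem_ball_self one_pos))).2
      hf.1.differentiableOn).analyticOnNhd isOpen_ball
  refine fun z hz => (hd z hz).inv ?_
  rcases eq_or_ne z 0 with rfl | hz0
  · simp [hf.2.2]
  · rw [dslope_zero_eq_div hf.2.1 hz0]
    exact div_ne_zero (hne z hz hz0) hz0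

lemma inv_dslope_mul_self {f : ℂ → ℂ} (hf0 : f 0 = 0) {z : ℂ} (hz : z ≠ 0 → f z ≠ 0) :
    (dslope f 0 z)⁻¹ * f z = z := by
  rcases eq_or_ne z 0 with rfl | hz0
  · simp [hf0]
  · rw [dslope_zero_eq_div hf0 hz0, inv_div, div_mul_cancel₀ _ (hz hz0)]

lemma InA.pw_eq_inv_dslope_cpow {f : ℂ → ℂ} (hf : InA f) (μ : ℝ) (z : ℂ) :
    pw f μ z = (dslope f 0 z)⁻¹ ^ (μ : ℂ) := by
  rcases eq_or_ne z 0 with rfl | hz0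
  · simp [pw, hf.2.2]
  · rw [pw, if_neg hz0, dslope_zero_eq_div hf.2.1 hz0, inv_div]

lemma InA.deriv_mul_inv_dslope_mul_pw {f : ℂ → ℂ} (hf : InA f) (μ : ℝ) {z : ℂ}
    (hz : z ≠ 0 → f z ≠ 0) :
    deriv f z * (dslope f 0 z)⁻¹ * pw f μ z
      = deriv f z * (if z = 0 then 1 else (z / f z) ^ ((μ : ℂ) + 1)) := by
  rcases eq_or_ne z 0 with rfl | hz0
  · simp [pw, hf.2.2]
  · rw [pw, if_neg hz0, if_neg hz0, dslope_zero_eq_div hf.2.1 hz0, inv_div,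
      cpow_add _ _ (div_ne_zero hz0 (hz hz0)), cpow_one]
    ring

lemma InA.hasSum_one_sub_deriv_mul_inv_dslope_mul_pw {f : ℂ → ℂ} {μ : ℝ} (hμ : μ ≠ 0)
    (hf : InA f) (hne : ∀ z ∈ unitDisk, z ≠ 0 → f z ≠ 0) {c : ℕ → ℂ}
    (hc : ∀ z ∈ unitDisk, HasSum (fun n => c n * z ^ n) (pw f μ z - 1)) {z : ℂ}
    (hz : z ∈ unitDisk) :
    HasSum (fun n => (n / μ - 1) * c n * z ^ n)
      (1 - deriv f z * (dslope f 0 z)⁻¹ * pw f μ z) := by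
  have hcs : ∀ z ∈ ball (0 : ℂ) 1, Summable fun n => c n * z ^ n :=
    fun z hz => (hc z hz).summable
  have hS : ∀ z ∈ unitDisk, pw f μ z = 1 + ∑' n, c n * z ^ n := fun z hz => by
    rw [(hc z hz).tsum_eq]
    ring
  have hid := eqOn_mul_deriv_mul_mul_of_eqOn_cpow (μ := (μ : ℂ))
    (P := fun w => 1 + ∑' n, c n * w ^ n) isOpen_ball
    (convex_ball 0 1).isPreconnected (mem_ball_self one_pos) hf.1
    (hf.analyticOnNhd_inv_dslope hne)
    (((differentiableOn_tsum_mul_pow hcs).const_add 1).analyticOnNhd isOpen_ball)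
    (fun z hz => inv_dslope_mul_self hf.2.1 (hne z hz)) (by simp [hf.2.2])
    (fun z hz => (hS z hz).symm.trans (hf.pw_eq_inv_dslope_cpow μ z)) hz
  simp only [deriv_const_add, ← hS z hz] at hid
  have hμC : (μ : ℂ) ≠ 0 := by exact_mod_cast hμ
  have hsum := ((hasSum_nat_mul_mul_pow hcs hz).div_const (μ : ℂ)).sub (hc z hz)
  have hterm (n : ℕ) : n * c n * z ^ n / μ - c n * z ^ n = (n / μ - 1) * c n * z ^ n := by
    ring
  have hval : z * deriv (fun w => ∑' n, c n * w ^ n) z / μ - (pw f μ z - 1)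
      = 1 - deriv f z * (dslope f 0 z)⁻¹ * pw f μ z := by
    field_simp
    linear_combination hid
  rwa [hval, funext hterm] at hsum

lemma sum_range_le_of_hasSum_mul_pow_le {d : ℕ → ℝ} {C : ℝ} (hd : ∀ n, 0 ≤ d n)
    (h : ∀ r ∈ Ioo (0 : ℝ) 1, ∃ s ≤ C, HasSum (fun n => d n * r ^ n) s) (N : ℕ) :
    ∑ n ∈ Finset.range N, d n ≤ C := by
  have hlim : Tendsto (fun r : ℝ => ∑ n ∈ Finset.range N, d n * r ^ n) (𝓝[<] 1)
      (𝓝 (∑ n ∈ Finset.range N, d n)) := by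
    have hc : Continuous fun r : ℝ => ∑ n ∈ Finset.range N, d n * r ^ n := by fun_prop
    simpa using (hc.tendsto 1).mono_left nhdsWithin_le_nhds
  refine le_of_tendsto hlim ?_
  filter_upwards [Ioo_mem_nhdsLT zero_lt_one] with r hr
  obtain ⟨s, hsC, hs⟩ := h r hr
  exact (sum_le_hasSum _ (fun n _ => mul_nonneg (hd n) (pow_nonneg hr.1.le n)) hs).trans hsC

lemma norm_le_of_hasSum_of_re_le {d : ℕ → ℝ} {G : ℂ → ℂ} {C : ℝ} (hd : ∀ n, 0 ≤ d n)
    (hG : ∀ z ∈ ball (0 : ℂ) 1, HasSum (fun n => (d n : ℂ) * z ^ n) (G z))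
    (hC : ∀ r ∈ Ioo (0 : ℝ) 1, (G r).re ≤ C) {z : ℂ} (hz : z ∈ ball (0 : ℂ) 1) :
    ‖G z‖ ≤ C := by
  have hreal : ∀ r ∈ Ioo (0 : ℝ) 1, HasSum (fun n => d n * r ^ n) (G r).re := fun r hr => by
    have hr' : (r : ℂ) ∈ ball (0 : ℂ) 1 := by simpa [abs_of_pos hr.1] using hr.2
    simpa [← ofReal_pow] using (hG r hr').mapL reCLM
  have hpartial := sum_range_le_of_hasSum_mul_pow_le hd fun r hr => ⟨_, hC r hr, hreal r hr⟩
  have hsum : HasSum d (∑' n, d n) := (summable_of_sum_range_le hd hpartial).hasSum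
  refine ((hG z hz).norm_le_of_bounded hsum fun n => ?_).trans
    (Real.tsum_le_of_sum_range_le hd hpartial)
  rw [norm_mul, norm_pow, norm_real, Real.norm_of_nonneg (hd n)]
  exact mul_le_of_le_one_right (hd n) (pow_le_one₀ (norm_nonneg z) (mem_ball_zero_iff.1 hz).le)

lemma Complex.arg_cpow_ofReal {w : ℂ} (hw : w ≠ 0) {μ : ℝ} (hμ0 : 0 ≤ μ) (hμ1 : μ ≤ 1) :
    arg (w ^ (μ : ℂ)) = arg w * μ := by
  have hlo := neg_pi_lt_arg w
  have hhi := arg_le_pi w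
  rw [cpow_ofReal, arg_real_mul _ (Real.rpow_pos_of_pos (norm_pos_iff.2 hw) μ), ofReal_cos,
    ofReal_sin]
  exact arg_cos_add_sin_mul_I ⟨by nlinarith [Real.pi_pos], by nlinarith [Real.pi_pos]⟩

lemma Complex.pos_of_cpow_pos {w : ℂ} {μ : ℝ} (hμ0 : 0 < μ) (hμ1 : μ ≤ 1)
    (h : 0 < w ^ (μ : ℂ)) : 0 < w := by
  have hw : w ≠ 0 := by
    rintro rfl
    simp [zero_cpow (ofReal_ne_zero.2 hμ0.ne')] at h
  have harg : arg w * μ = 0 := by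
    rw [← arg_cpow_ofReal hw hμ0.le hμ1, arg_eq_zero_iff_zero_le]
    exact h.le
  exact lt_of_le_of_ne (arg_eq_zero_iff_zero_le.1
    ((mul_eq_zero.1 harg).resolve_right hμ0.ne')) hw.symm

lemma Complex.re_mul_mul_cpow_pos {a w : ℂ} {μ : ℝ} (hμ0 : 0 < μ) (hμ1 : μ ≤ 1)
    (hw : 0 < w ^ (μ : ℂ)) (ha : 0 < (a * w⁻¹ ^ ((μ : ℂ) - 1)).re) :
    0 < (a * w * w ^ (μ : ℂ)).re := by
  have hw0 : 0 < w := pos_of_cpow_pos hμ0 hμ1 hw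
  have harg : arg w ≠ Real.pi := by
    rw [arg_eq_zero_iff_zero_le.2 hw0.le]
    exact Real.pi_ne_zero.symm
  have hsq : 0 < (w ^ (μ : ℂ)) ^ 2 := pow_pos hw 2
  have hmul : a * w * w ^ (μ : ℂ) = a * w⁻¹ ^ ((μ : ℂ) - 1) * ((w ^ (μ : ℂ)) ^ 2).re := by
    rw [← eq_re_of_ofReal_le hsq.le, inv_cpow _ _ harg, cpow_sub _ _ hw0.ne', cpow_one]
    field_simp [hw.ne']
  rw [hmul, re_mul_ofReal]
  exact mul_pos ha (pos_iff.1 hsq).1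

lemma InA.re_deriv_mul_inv_dslope_mul_pw_pos {f : ℂ → ℂ} (hf : InA f) {μ : ℝ} (hμ0 : 0 < μ)
    (hμ1 : μ ≤ 1) {r : ℝ} (hr : r ≠ 0) (hpw : 0 < pw f μ r)
    (hre : 0 < (deriv f r * (f r / r) ^ ((μ : ℂ) - 1)).re) :
    0 < (deriv f r * (dslope f 0 r)⁻¹ * pw f μ r).re := by
  rw [← dslope_zero_eq_div hf.2.1 (ofReal_ne_zero.2 hr), ← inv_inv (dslope f 0 r)] at hre
  rw [hf.pw_eq_inv_dslope_cpow] at hpw ⊢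
  exact re_mul_mul_cpow_pos hμ0 hμ1 hpw hre

/-- Bazilevič-type condition implies `f ∈ 𝒰(1, μ)`. -/
theorem stmt6 (μ : ℝ) (hμ₀ : 0 < μ) (hμ₁ : μ ≤ 1)
    (f : ℂ → ℂ) (hf : InS f) (b : ℕ → ℝ) (hb : ∀ n, 1 ≤ n → 0 ≤ b n)
    (hrepr : ∀ z ∈ unitDisk,
      HasSum (fun n : ℕ => (b (n + 1) : ℂ) * z ^ (n + 1)) (pw f μ z - 1))
    (hre : ∀ z ∈ unitDisk,
      0 < (deriv f z *
        (if z = 0 then 1 else (f z / z) ^ ((μ : ℂ) - 1))).re) :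
    InU f 1 μ := by
  have hne : ∀ z ∈ unitDisk, z ≠ 0 → f z ≠ 0 := fun z hz => hf.ne_zero hz
  -- `pw f μ 0 - 1 = 0`, so the expansion can be started at `n = 0` with `a 0 = 0`
  set a : ℕ → ℝ := Function.update b 0 0
  have ha : ∀ z ∈ unitDisk, HasSum (fun n => (a n : ℂ) * z ^ n) (pw f μ z - 1) := fun z hz =>
    (hasSum_nat_add_iff' 1).1 (by simpa [a] using hrepr z hz)
  have hd (n : ℕ) : 0 ≤ (n / μ - 1) * a n := by
    rcases n with _ | n
    · simp [a]
    · refine mul_nonneg ?_ (by simpa [a] using hb (n + 1) n.succ_pos)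
      rw [sub_nonneg, one_le_div hμ₀]
      exact hμ₁.trans (by simp)
  refine ⟨hf.1, hne, fun z hz => ?_⟩
  rw [← hf.1.deriv_mul_inv_dslope_mul_pw μ (hne z hz), norm_sub_rev]
  have hG : ∀ z ∈ unitDisk, HasSum (fun n => (((n / μ - 1) * a n : ℝ) : ℂ) * z ^ n)
      (1 - deriv f z * (dslope f 0 z)⁻¹ * pw f μ z) := fun z hz => by
    simpa using hf.1.hasSum_one_sub_deriv_mul_inv_dslope_mul_pw hμ₀.ne' hne ha hz
  refine norm_le_of_hasSum_of_re_le hd hG (fun r hr => ?_) hz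
  have hrD : (r : ℂ) ∈ unitDisk := by simpa [unitDisk, abs_of_pos hr.1] using hr.2
  have hr0 : (r : ℂ) ≠ 0 := ofReal_ne_zero.2 hr.1.ne'
  have hpw : 0 < pw f μ r := one_pos.trans_le <| sub_nonneg.1 <| (hrepr r hrD).nonneg fun n =>
    mul_nonneg (zero_le_real.2 (hb _ n.succ_pos)) (pow_nonneg (zero_le_real.2 hr.1.le) _)
  have hpos := hf.1.re_deriv_mul_inv_dslope_mul_pw_pos hμ₀ hμ₁ hr.1.ne' hpw
    (by simpa [hr0] using hre r hrD)
  simpa using hpos.le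
end
end

section
/- Let 0 ≤ α < 1 and μ > 0. Suppose f ∈ 𝒮*(α) has the representation (z/f(z))^μ = 1 + Σ_{n=1}^∞ b_n z^n with b_n ≥ 0 for all n. Then Σ_{n=1}^∞ (n − μ(1−α)) b_n ≤ μ(1−α). In particular, if moreover 0 < μ ≤ 1, then f ∈ 𝒰(1−α, μ). -/
/-!
Write `g = (z / f)^μ = 1 + ∑ bₙ zⁿ`. Logarithmic differentiation gives
`z g' = μ g (1 - z f' / f)`; both sides are analytic on the disk, so it suffices to check this
near `0`, where `z / f` is close to `1` and the principal power is differentiable.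

At a real `r ∈ (0, 1)` everything is real: `g(r) = 1 + ∑ bₙ rⁿ > 0` and `r g'(r) = ∑ n bₙ rⁿ`,
so `Re (z f' / f) > α` yields `∑ (n - μ(1 - α)) bₙ rⁿ ≤ μ(1 - α)`. Only finitely many of these
terms are negative, so letting `r → 1` gives the coefficient inequality.

For `μ ≤ 1`, `f'(z) (z / f)^(μ+1) - 1 = g - 1 - z g' / μ = ∑ (1 - n / μ) bₙ zⁿ` has modulus at most
`∑ (n / μ - 1) bₙ ≤ μ⁻¹ ∑ (n - μ(1 - α)) bₙ ≤ 1 - α`.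
-/

open Complex Metric Set

noncomputable section

open Filter Topology

theorem norm_mul_succ_mul_pow_le {a ρ : ℝ} (ha : 0 ≤ a) (n : ℕ) {y : ℂ} (hy : ‖y‖ ≤ ρ) :
    ‖(a : ℂ) * (n + 1) * y ^ n‖ ≤ ((n : ℝ) + 1) * a * ρ ^ n := by
  have hn : ‖((n : ℂ) + 1)‖ = (n : ℝ) + 1 := by norm_cast
  rw [norm_mul, norm_mul, norm_pow, hn, norm_real, Real.norm_of_nonneg ha, mul_comm a]
  gcongr

theorem summable_succ_mul_mul_pow {a : ℕ → ℝ} (ha : ∀ n, 0 ≤ a n)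
    (hconv : ∀ r ∈ Ioo (0 : ℝ) 1, Summable fun n : ℕ => a n * r ^ (n + 1))
    {ρ : ℝ} (hρ₀ : 0 ≤ ρ) (hρ₁ : ρ < 1) :
    Summable fun n : ℕ => ((n : ℝ) + 1) * a n * ρ ^ n := by
  obtain ⟨σ, hρσ, hσ₁⟩ := exists_between hρ₁
  have hσ₀ : 0 < σ := hρ₀.trans_lt hρσ
  set M := ∑' n : ℕ, a n * σ ^ (n + 1)
  have hq : ‖ρ / σ‖ < 1 := by
    rwa [Real.norm_of_nonneg (by positivity), div_lt_one hσ₀]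
  have hgeom : Summable fun n : ℕ => ((n : ℝ) + 1) * (ρ / σ) ^ n := by
    simpa [add_mul] using
      (summable_pow_mul_geometric_of_norm_lt_one 1 hq).add (summable_geometric_of_norm_lt_one hq)
  refine (hgeom.mul_left (M / σ)).of_nonneg_of_le (fun n => by have := ha n; positivity)
    fun n => ?_
  have hterm : a n * σ ^ (n + 1) ≤ M :=
    (hconv σ ⟨hσ₀, hσ₁⟩).le_tsum n fun m _ => mul_nonneg (ha m) (by positivity)
  calc ((n : ℝ) + 1) * a n * ρ ^ n = ((n : ℝ) + 1) * (a n * σ ^ (n + 1)) / σ * (ρ / σ) ^ n := by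
        rw [div_pow, pow_succ]
        field_simp
    _ ≤ ((n : ℝ) + 1) * M / σ * (ρ / σ) ^ n := by gcongr
    _ = M / σ * (((n : ℝ) + 1) * (ρ / σ) ^ n) := by ring

theorem hasDerivAt_tsum_mul_pow_succ {a : ℕ → ℝ} (ha : ∀ n, 0 ≤ a n)
    (hconv : ∀ r ∈ Ioo (0 : ℝ) 1, Summable fun n : ℕ => a n * r ^ (n + 1)) {z : ℂ} (hz : ‖z‖ < 1) :
    HasDerivAt (fun y : ℂ => ∑' n : ℕ, (a n : ℂ) * y ^ (n + 1))
      (∑' n : ℕ, (a n : ℂ) * (n + 1) * z ^ n) z := by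
  obtain ⟨ρ, hzρ, hρ₁⟩ := exists_between hz
  have hρ₀ : 0 < ρ := (norm_nonneg z).trans_lt hzρ
  refine hasDerivAt_tsum_of_isPreconnected (g := fun n y => (a n : ℂ) * y ^ (n + 1))
    (g' := fun n y => (a n : ℂ) * (n + 1) * y ^ n) (summable_succ_mul_mul_pow ha hconv hρ₀.le hρ₁)
    isOpen_ball (convex_ball (0 : ℂ) ρ).isPreconnected (fun n y _ => ?_) (fun n y hy => ?_)
    (mem_ball_self (x := (0 : ℂ)) hρ₀) (by simp) (mem_ball_zero_iff.2 hzρ)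
  · simpa [mul_assoc] using (hasDerivAt_pow (n + 1) y).const_mul (a n : ℂ)
  · exact norm_mul_succ_mul_pow_le (ha n) n (mem_ball_zero_iff.1 hy).le

theorem eventually_div_mem_slitPlane {f : ℂ → ℂ} (hf₀ : f 0 = 0) (hf : HasDerivAt f 1 0) :
    ∀ᶠ z in 𝓝[≠] (0 : ℂ), z / f z ∈ slitPlane := by
  have hcont : ContinuousAt (fun z => (dslope f 0 z)⁻¹) 0 :=
    (continuousAt_dslope_same.2 hf.differentiableAt).inv₀ (by simp [hf.deriv])
  have hmem : (dslope f 0 0)⁻¹ ∈ slitPlane := by simp [hf.deriv]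
  filter_upwards [nhdsWithin_le_nhds (hcont.preimage_mem_nhds (isOpen_slitPlane.mem_nhds hmem)),
    self_mem_nhdsWithin] with z hz hz0
  simpa [dslope_of_ne _ hz0, slope_def_field, hf₀] using hz

theorem mul_mul_deriv_eq_of_eq_div_cpow {f g : ℂ → ℂ} {U : Set ℂ} {μ : ℂ} (hU : IsOpen U)
    (hUc : IsPreconnected U) (h₀ : 0 ∈ U) (hf : AnalyticOnNhd ℂ f U) (hf₀ : f 0 = 0)
    (hf'₀ : deriv f 0 = 1) (hg : DifferentiableOn ℂ g U)
    (hgf : ∀ z ∈ U, z ≠ 0 → g z = (z / f z) ^ μ) {z : ℂ} (hz : z ∈ U) :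
    z * f z * deriv g z = μ * g z * (f z - z * deriv f z) := by
  have hg' : AnalyticOnNhd ℂ g U := hg.analyticOnNhd hU
  refine ((analyticOnNhd_id.mul hf).mul hg'.deriv).eqOn_of_preconnected_of_frequently_eq
    ((analyticOnNhd_const.mul hg').mul (hf.sub (analyticOnNhd_id.mul hf.deriv))) hUc h₀ ?_ hz
  have hf1 : HasDerivAt f 1 0 := hf'₀ ▸ (hf 0 h₀).differentiableAt.hasDerivAt
  refine Eventually.frequently ?_
  filter_upwards [eventually_div_mem_slitPlane hf₀ hf1, nhdsWithin_le_nhds (hU.mem_nhds h₀),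
    self_mem_nhdsWithin] with w hslit hwU hw0
  replace hw0 : w ≠ 0 := hw0
  have hfw : f w ≠ 0 := fun h => by simp [h] at hslit
  have hderiv :
      HasDerivAt g (μ * (w / f w) ^ (μ - 1) * ((1 * f w - w * deriv f w) / f w ^ 2)) w := by
    refine (((hasDerivAt_id w).div (hf w hwU).differentiableAt.hasDerivAt hfw).cpow_const
      hslit).congr_of_eventuallyEq ?_
    filter_upwards [hU.mem_nhds hwU, eventually_ne_nhds hw0] with y hyU hy0
    exact hgf y hyU hy0
  show w * f w * deriv g w = μ * g w * (f w - w * deriv f w)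
  rw [hderiv.deriv, hgf w hwU hw0, cpow_sub _ _ (div_ne_zero hw0 hfw), cpow_one]
  field_simp

theorem summable_and_tsum_le_of_tsum_mul_pow_le {t : ℕ → ℝ} {C : ℝ}
    (ht : ∀ᶠ n in atTop, 0 ≤ t n)
    (hsum : ∀ r ∈ Ioo (0 : ℝ) 1, Summable fun n : ℕ => t n * r ^ (n + 1))
    (hle : ∀ r ∈ Ioo (0 : ℝ) 1, ∑' n : ℕ, t n * r ^ (n + 1) ≤ C) :
    Summable t ∧ ∑' n : ℕ, t n ≤ C := by
  obtain ⟨N, hN⟩ := eventually_atTop.1 ht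
  have hpartial : ∀ M ≥ N, ∑ n ∈ Finset.range M, t n ≤ C := by
    intro M hM
    have hlim : Tendsto (fun r : ℝ => ∑ n ∈ Finset.range M, t n * r ^ (n + 1)) (𝓝[<] 1)
        (𝓝 (∑ n ∈ Finset.range M, t n)) := by
      have hcont : Continuous fun r : ℝ => ∑ n ∈ Finset.range M, t n * r ^ (n + 1) := by fun_prop
      simpa using (hcont.tendsto 1).mono_left nhdsWithin_le_nhds
    refine le_of_tendsto hlim ?_
    filter_upwards [Ioo_mem_nhdsLT zero_lt_one] with r hr
    refine ((hsum r hr).sum_le_tsum _ fun n hn => ?_).trans (hle r hr)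
    have hNn : N ≤ n := by simp only [Finset.mem_range, not_lt] at hn; omega
    exact mul_nonneg (hN n hNn) (pow_nonneg hr.1.le _)
  have htail : Summable fun n => t (n + N) := by
    refine summable_of_sum_range_le (c := C - ∑ n ∈ Finset.range N, t n)
      (fun n => hN _ (by omega)) fun M => ?_
    have := hpartial (N + M) (by omega)
    rw [Finset.sum_range_add] at this
    simp only [add_comm N] at this
    linarith
  have hs : Summable t := (summable_nat_add_iff N).1 htail
  exact ⟨hs, le_of_tendsto hs.hasSum.tendsto_sum_nat (eventually_atTop.2 ⟨N, hpartial⟩)⟩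

theorem summable_and_tsum_div_sub_one_mul_le {a : ℕ → ℝ} {μ α : ℝ} (ha : ∀ n, 0 ≤ a n)
    (hμ : 0 < μ) (hμ₁ : μ ≤ 1) (hα : 0 ≤ α)
    (hsum : Summable fun n : ℕ => (((n : ℝ) + 1) - μ * (1 - α)) * a n)
    (hle : ∑' n : ℕ, (((n : ℝ) + 1) - μ * (1 - α)) * a n ≤ μ * (1 - α)) :
    Summable (fun n : ℕ => (((n : ℝ) + 1) / μ - 1) * a n) ∧
      ∑' n : ℕ, (((n : ℝ) + 1) / μ - 1) * a n ≤ 1 - α := by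
  have hd₀ : ∀ n : ℕ, 0 ≤ (((n : ℝ) + 1) / μ - 1) * a n := fun n => mul_nonneg (by
    rw [sub_nonneg, le_div_iff₀ hμ, one_mul]; linarith [n.cast_nonneg (α := ℝ)]) (ha n)
  have hd_le : ∀ n : ℕ,
      (((n : ℝ) + 1) / μ - 1) * a n ≤ (((n : ℝ) + 1) - μ * (1 - α)) * a n / μ := fun n => by
    rw [le_div_iff₀ hμ]
    have : ((n : ℝ) + 1) / μ * μ = (n : ℝ) + 1 := div_mul_cancel₀ _ hμ.ne'
    nlinarith [ha n, mul_nonneg hμ.le hα]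
  have hd := (hsum.div_const μ).of_nonneg_of_le hd₀ hd_le
  refine ⟨hd, ?_⟩
  calc _ ≤ ∑' n : ℕ, (((n : ℝ) + 1) - μ * (1 - α)) * a n / μ :=
        hd.tsum_le_tsum hd_le (hsum.div_const μ)
    _ ≤ μ * (1 - α) / μ := by rw [tsum_div_const]; gcongr
    _ = 1 - α := by field_simp

theorem InS.apply_ne_zero {f : ℂ → ℂ} (hf : InS f) {z : ℂ} (hz : z ∈ unitDisk) (hz₀ : z ≠ 0) :
    f z ≠ 0 := fun h =>
  hz₀ (hf.2 hz (mem_ball_self one_pos) (h.trans hf.1.2.1.symm))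

theorem ofReal_mem_unitDisk {r : ℝ} (hr : r ∈ Ioo (0 : ℝ) 1) : (r : ℂ) ∈ unitDisk := by
  simp [unitDisk, abs_of_pos hr.1, hr.2]

section Representation

def HasPwExpansion (f : ℂ → ℂ) (μ : ℝ) (a : ℕ → ℝ) : Prop :=
  ∀ z ∈ unitDisk, HasSum (fun n : ℕ => (a n : ℂ) * z ^ (n + 1)) (pw f μ z - 1)

variable {f : ℂ → ℂ} {μ : ℝ} {a : ℕ → ℝ}

theorem HasPwExpansion.summable_mul_pow (hrepr : HasPwExpansion f μ a) :
    ∀ r ∈ Ioo (0 : ℝ) 1, Summable fun n : ℕ => a n * r ^ (n + 1) := fun r hr =>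
  Complex.summable_ofReal.1 (by push_cast; exact (hrepr r (ofReal_mem_unitDisk hr)).summable)

theorem HasPwExpansion.hasDerivAt (hrepr : HasPwExpansion f μ a) (ha : ∀ n, 0 ≤ a n)
    {z : ℂ} (hz : z ∈ unitDisk) :
    HasDerivAt (pw f μ) (∑' n : ℕ, (a n : ℂ) * (n + 1) * z ^ n) z := by
  refine ((hasDerivAt_tsum_mul_pow_succ ha hrepr.summable_mul_pow
    (mem_ball_zero_iff.1 hz)).const_add 1).congr_of_eventuallyEq ?_
  filter_upwards [isOpen_ball.mem_nhds hz] with y hy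
  rw [(hrepr y hy).tsum_eq]
  ring

theorem HasPwExpansion.mul_mul_tsum_eq (hrepr : HasPwExpansion f μ a) (hf : InS f)
    (ha : ∀ n, 0 ≤ a n) {z : ℂ} (hz : z ∈ unitDisk) :
    z * f z * ∑' n : ℕ, (a n : ℂ) * (n + 1) * z ^ n = μ * pw f μ z * (f z - z * deriv f z) := by
  have hd := fun z (hz : z ∈ unitDisk) => hrepr.hasDerivAt ha hz
  rw [← (hd z hz).deriv]
  exact mul_mul_deriv_eq_of_eq_div_cpow isOpen_ball (convex_ball 0 1).isPreconnected
    (mem_ball_self one_pos) hf.1.1 hf.1.2.1 hf.1.2.2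
    (fun z hz => (hd z hz).differentiableAt.differentiableWithinAt) (fun z _ hz₀ => if_neg hz₀) hz

theorem tsum_sub_mul_mul_pow_le {α : ℝ} (hf : InSstar f α) (hμ : 0 < μ) (ha : ∀ n, 0 ≤ a n)
    (hrepr : HasPwExpansion f μ a) {r : ℝ} (hr : r ∈ Ioo (0 : ℝ) 1) :
    ∑' n : ℕ, (((n : ℝ) + 1) - μ * (1 - α)) * a n * r ^ (n + 1) ≤ μ * (1 - α) := by
  have hrD := ofReal_mem_unitDisk hr
  have hr₀ : (r : ℂ) ≠ 0 := ofReal_ne_zero.2 hr.1.ne'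
  have hfr : f r ≠ 0 := hf.1.apply_ne_zero hrD hr₀
  have hs := hrepr.summable_mul_pow r hr
  have hs' : Summable fun n : ℕ => ((n : ℝ) + 1) * a n * r ^ (n + 1) :=
    ((summable_succ_mul_mul_pow ha hrepr.summable_mul_pow hr.1.le hr.2).mul_left
      r).congr fun n => by ring
  set A := ∑' n : ℕ, a n * r ^ (n + 1)
  set B := ∑' n : ℕ, ((n : ℝ) + 1) * a n * r ^ (n + 1)
  have hA : 0 ≤ A := tsum_nonneg fun n => mul_nonneg (ha n) (pow_nonneg hr.1.le _)
  have hpw : pw f μ r = 1 + A := by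
    have hA' : HasSum (fun n : ℕ => (a n : ℂ) * (r : ℂ) ^ (n + 1)) A := by
      exact_mod_cast Complex.hasSum_ofReal.2 hs.hasSum
    linear_combination (hrepr r hrD).unique hA'
  have hB : (r : ℂ) * ∑' n : ℕ, (a n : ℂ) * (n + 1) * (r : ℂ) ^ n = B := by
    rw [← tsum_mul_left, Complex.ofReal_tsum]
    congr 1 with n
    push_cast
    ring
  have hBw : (B : ℂ) = μ * (1 + A) * (1 - r * deriv f r / f r) := by
    rw [← hB, ← hpw]
    field_simp
    linear_combination hrepr.mul_mul_tsum_eq hf.1 ha hrD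
  have hBre : B = μ * (1 + A) * (1 - (zRatio f r).re) := by
    rw [zRatio, if_neg hr₀]
    simpa using congrArg re hBw
  have htsum : ∑' n : ℕ, (((n : ℝ) + 1) - μ * (1 - α)) * a n * r ^ (n + 1) =
      B - μ * (1 - α) * A := by
    rw [← tsum_mul_left, ← hs'.tsum_sub (hs.mul_left _)]
    congr 1 with n
    ring
  rw [htsum]
  nlinarith [mul_lt_mul_of_pos_left (hf.2 r hrD) (mul_pos hμ (by linarith : 0 < 1 + A))]

theorem summable_and_tsum_sub_mul_le {α : ℝ} (hf : InSstar f α) (hμ : 0 < μ)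
    (ha : ∀ n, 0 ≤ a n) (hrepr : HasPwExpansion f μ a) :
    Summable (fun n : ℕ => (((n : ℝ) + 1) - μ * (1 - α)) * a n) ∧
      ∑' n : ℕ, (((n : ℝ) + 1) - μ * (1 - α)) * a n ≤ μ * (1 - α) := by
  have hconv := hrepr.summable_mul_pow
  refine summable_and_tsum_le_of_tsum_mul_pow_le ?_ (fun r hr => ?_)
    (fun r hr => tsum_sub_mul_mul_pow_le hf hμ ha hrepr hr)
  · filter_upwards [eventually_ge_atTop ⌈μ * (1 - α)⌉₊] with n hn
    have := (Nat.le_ceil (μ * (1 - α))).trans (Nat.cast_le.2 hn)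
    exact mul_nonneg (by linarith) (ha n)
  · refine (((summable_succ_mul_mul_pow ha hconv hr.1.le hr.2).mul_left r).sub
      ((hconv r hr).mul_left (μ * (1 - α)))).congr fun n => ?_
    ring

theorem HasPwExpansion.hasSum_deriv_mul_cpow_sub_one (hrepr : HasPwExpansion f μ a) (hf : InS f)
    (hμ : 0 < μ) (ha : ∀ n, 0 ≤ a n) {z : ℂ} (hz : z ∈ unitDisk) (hz₀ : z ≠ 0) :
    HasSum (fun n : ℕ => (((1 - ((n : ℝ) + 1) / μ) * a n : ℝ) : ℂ) * z ^ (n + 1))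
      (deriv f z * (z / f z) ^ ((μ : ℂ) + 1) - 1) := by
  have hμ' : (μ : ℂ) ≠ 0 := ofReal_ne_zero.2 hμ.ne'
  have hfz : f z ≠ 0 := hf.apply_ne_zero hz hz₀
  have hS : Summable fun n : ℕ => (a n : ℂ) * (n + 1) * z ^ n :=
    .of_norm_bounded (summable_succ_mul_mul_pow ha hrepr.summable_mul_pow (norm_nonneg z)
      (mem_ball_zero_iff.1 hz)) fun n => norm_mul_succ_mul_pow_le (ha n) n le_rfl
  have hkey := hrepr.mul_mul_tsum_eq hf ha hz
  have hrz := hrepr z hz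
  rw [pw, if_neg hz₀] at hkey hrz
  have hterms : (fun n : ℕ => (((1 - ((n : ℝ) + 1) / μ) * a n : ℝ) : ℂ) * z ^ (n + 1)) =
      fun n : ℕ => (a n : ℂ) * z ^ (n + 1) - z / μ * ((a n : ℂ) * (n + 1) * z ^ n) := by
    ext n
    push_cast
    field_simp
    ring
  have hvalue : deriv f z * (z / f z) ^ ((μ : ℂ) + 1) - 1 =
      ((z / f z) ^ (μ : ℂ) - 1) - z / μ * ∑' n : ℕ, (a n : ℂ) * (n + 1) * z ^ n := by
    rw [cpow_add _ _ (div_ne_zero hz₀ hfz), cpow_one]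
    field_simp
    linear_combination hkey
  rw [hterms, hvalue]
  exact hrz.sub (hS.hasSum.mul_left _)

theorem norm_deriv_mul_cpow_sub_one_le {α : ℝ} (hf : InSstar f α) (hμ : 0 < μ) (hμ₁ : μ ≤ 1)
    (hα : 0 ≤ α) (ha : ∀ n, 0 ≤ a n) (hrepr : HasPwExpansion f μ a)
    {z : ℂ} (hz : z ∈ unitDisk) (hz₀ : z ≠ 0) :
    ‖deriv f z * (z / f z) ^ ((μ : ℂ) + 1) - 1‖ ≤ 1 - α := by
  obtain ⟨hsum, hle⟩ := summable_and_tsum_sub_mul_le hf hμ ha hrepr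
  obtain ⟨hd, hd_tsum⟩ := summable_and_tsum_div_sub_one_mul_le ha hμ hμ₁ hα hsum hle
  have hterm : ∀ n : ℕ, ‖(((1 - ((n : ℝ) + 1) / μ) * a n : ℝ) : ℂ) * z ^ (n + 1)‖ ≤
      (((n : ℝ) + 1) / μ - 1) * a n := fun n => by
    have hn : 1 ≤ ((n : ℝ) + 1) / μ := by
      rw [le_div_iff₀ hμ, one_mul]; linarith [n.cast_nonneg (α := ℝ)]
    rw [norm_mul, norm_real, norm_pow, Real.norm_eq_abs, abs_mul, abs_of_nonpos (by linarith),
      abs_of_nonneg (ha n), neg_sub]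
    exact mul_le_of_le_one_right (by have := ha n; nlinarith)
      (pow_le_one₀ (norm_nonneg z) (mem_ball_zero_iff.1 hz).le)
  have hnorm := hd.of_nonneg_of_le (fun _ => norm_nonneg _) hterm
  rw [← (hrepr.hasSum_deriv_mul_cpow_sub_one hf.1 hμ ha hz hz₀).tsum_eq]
  calc _ ≤ _ := norm_tsum_le_tsum_norm hnorm
    _ ≤ _ := hnorm.tsum_le_tsum hterm hd
    _ ≤ 1 - α := hd_tsum

end Representation

theorem stmt8_general (μ α : ℝ) (hμ : 0 < μ) (hα₀ : 0 ≤ α)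
    (f : ℂ → ℂ) (hf : InSstar f α)
    (b : ℕ → ℝ) (hb : ∀ n, 1 ≤ n → 0 ≤ b n)
    (hrepr : ∀ z ∈ unitDisk,
      HasSum (fun n : ℕ => (b (n + 1) : ℂ) * z ^ (n + 1)) (pw f μ z - 1)) :
    (Summable (fun n : ℕ => (((n : ℝ) + 1) - μ * (1 - α)) * b (n + 1)) ∧
     ∑' n : ℕ, (((n : ℝ) + 1) - μ * (1 - α)) * b (n + 1) ≤ μ * (1 - α)) ∧
    (μ ≤ 1 → InU f (1 - α) μ) := by
  have hb' : ∀ n : ℕ, 0 ≤ b (n + 1) := fun n => hb (n + 1) n.succ_pos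
  refine ⟨summable_and_tsum_sub_mul_le hf hμ hb' hrepr, fun hμ₁ =>
    ⟨hf.1.1, fun z hz hz₀ => hf.1.apply_ne_zero hz hz₀, fun z hz => ?_⟩⟩
  by_cases hz₀ : z = 0
  · have hα₁ := hf.2 0 (mem_ball_self one_pos)
    simp only [zRatio, if_true, one_re] at hα₁
    simp [hz₀, hf.1.1.2.2, hα₁.le]
  · rw [if_neg hz₀]
    exact norm_deriv_mul_cpow_sub_one_le hf hμ hμ₁ hα₀ hb' hrepr hz hz₀

/-- coefficient condition for starlike functions of order `α`,
and the consequence `f ∈ 𝒰(1-α, μ)` when `0 < μ ≤ 1`. -/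
theorem stmt8 (μ α : ℝ) (hμ : 0 < μ) (hα₀ : 0 ≤ α) (hα₁ : α < 1)
    (f : ℂ → ℂ) (hf : InSstar f α)
    (b : ℕ → ℝ) (hb : ∀ n, 1 ≤ n → 0 ≤ b n)
    (hrepr : ∀ z ∈ unitDisk,
      HasSum (fun n : ℕ => (b (n + 1) : ℂ) * z ^ (n + 1)) (pw f μ z - 1)) :
    (Summable (fun n : ℕ => (((n : ℝ) + 1) - μ * (1 - α)) * b (n + 1)) ∧
     ∑' n : ℕ, (((n : ℝ) + 1) - μ * (1 - α)) * b (n + 1) ≤ μ * (1 - α)) ∧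
    (μ ≤ 1 → InU f (1 - α) μ) :=
  stmt8_general μ α hμ hα₀ f hf b hb hrepr
end
end
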